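/- Let ω ∈ U \ {0} satisfy the strong source condition K*Kω ∈ ∂J(u†) for some u† ∈ dom(J) with Ku† ≠ 0, and let f = Kω. Then with t₁ = 1 and γ = J(u†)/‖Ku†‖², the pair (u, p) given by u(t) = 0, p(t) = t K*Kω for 0 ≤ t < t₁ and u(t₁) = γ u† satisfies: (i) p(t) ∈ ∂J(0) for 0 ≤ t < t₁; (ii) p(t₁) = K*Kω ∈ ∂J(γ u†); (iii) the orthogonality ⟨K*(f − K u(t₁)), u(t₁)⟩ = 0. -/

import Mathlib

open RealInnerProductSpace

/-!
For an absolutely one-homogeneous `J`, a functional `p` is a subgradient at `u` exactly when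
`p ≤ J` everywhere with equality at `u`. Hence the source element `p = K*Kω` satisfies `|p| ≤ J`,
so every `t p` with `|t| ≤ 1` is a subgradient at `0`, and `p` stays a subgradient along the ray
through `u†`. Since `p u† = ⟪Kω, Ku†⟫ = J u†`, the choice `γ = J u† / ‖Ku†‖²` makes `γ Ku†` the
orthogonal projection of `Kω` onto the span of `Ku†`, which is the orthogonality relation.
-/

/-- The subdifferential of `J` at `u`. -/
def subdiff {U : Type*} [NormedAddCommGroup U] [NormedSpace ℝ U]
    (J : U → ℝ) (u : U) : Set (U →L[ℝ] ℝ) :=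
  {p | ∀ v : U, J u + p (v - u) ≤ J v}

/-- The Banach adjoint `K*` applied to `w ∈ H`. -/
noncomputable def Kstar {U H : Type*} [NormedAddCommGroup U] [NormedSpace ℝ U]
    [NormedAddCommGroup H] [InnerProductSpace ℝ H]
    (K : U →L[ℝ] H) (w : H) : U →L[ℝ] ℝ :=
  ((innerSL ℝ) w).comp K

section AbsHomogeneous

variable {U : Type*} [NormedAddCommGroup U] [NormedSpace ℝ U] {J : U → ℝ}

theorem map_zero_of_abs_homogeneous (hhom : ∀ (c : ℝ) (x : U), J (c • x) = |c| * J x) :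
    J 0 = 0 := by
  simpa using hhom 0 0

theorem mem_subdiff_iff_of_abs_homogeneous (hhom : ∀ (c : ℝ) (x : U), J (c • x) = |c| * J x)
    {p : U →L[ℝ] ℝ} {u : U} :
    p ∈ subdiff J u ↔ p u = J u ∧ ∀ v, p v ≤ J v := by
  constructor
  · intro hp
    have hJ0 := map_zero_of_abs_homogeneous hhom
    have h0 := hp 0
    have h2 := hp ((2 : ℝ) • u)
    rw [hhom, two_smul, add_sub_cancel_right] at h2
    simp only [zero_sub, map_neg, hJ0] at h0
    norm_num at h2
    have hpu : p u = J u := by linarith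
    refine ⟨hpu, fun v => ?_⟩
    have := hp v
    rw [map_sub, hpu] at this
    linarith
  · rintro ⟨hpu, hle⟩ v
    rw [map_sub, hpu, add_sub_cancel]
    exact hle v

theorem abs_apply_le_of_mem_subdiff (hhom : ∀ (c : ℝ) (x : U), J (c • x) = |c| * J x)
    {p : U →L[ℝ] ℝ} {u : U} (hp : p ∈ subdiff J u) (v : U) :
    |p v| ≤ J v := by
  have hle := ((mem_subdiff_iff_of_abs_homogeneous hhom).1 hp).2
  have hneg : J (-v) = J v := by simpa using hhom (-1) v
  have := hle (-v)
  rw [map_neg, hneg] at this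
  exact abs_le.2 ⟨by linarith, hle v⟩

theorem smul_mem_subdiff_zero (hhom : ∀ (c : ℝ) (x : U), J (c • x) = |c| * J x)
    {p : U →L[ℝ] ℝ} {u : U} (hp : p ∈ subdiff J u) {t : ℝ} (ht : |t| ≤ 1) :
    t • p ∈ subdiff J 0 := by
  refine (mem_subdiff_iff_of_abs_homogeneous hhom).2
    ⟨by simp [map_zero_of_abs_homogeneous hhom], fun v => ?_⟩
  calc (t • p) v = t * p v := rfl
    _ ≤ |t| * |p v| := by rw [← abs_mul]; exact le_abs_self _
    _ ≤ 1 * |p v| := by gcongr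
    _ ≤ J v := by rw [one_mul]; exact abs_apply_le_of_mem_subdiff hhom hp v

theorem mem_subdiff_smul (hhom : ∀ (c : ℝ) (x : U), J (c • x) = |c| * J x)
    {p : U →L[ℝ] ℝ} {u : U} (hp : p ∈ subdiff J u) {c : ℝ} (hc : 0 ≤ c) :
    p ∈ subdiff J (c • u) := by
  obtain ⟨hpu, hle⟩ := (mem_subdiff_iff_of_abs_homogeneous hhom).1 hp
  refine (mem_subdiff_iff_of_abs_homogeneous hhom).2 ⟨?_, hle⟩
  rw [map_smul, hpu, hhom, abs_of_nonneg hc, smul_eq_mul]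

end AbsHomogeneous

@[simp]
theorem Kstar_apply {U H : Type*} [NormedAddCommGroup U] [NormedSpace ℝ U]
    [NormedAddCommGroup H] [InnerProductSpace ℝ H] (K : U →L[ℝ] H) (w : H) (u : U) :
    Kstar K w u = ⟪w, K u⟫ :=
  rfl

/-- Also true for `b = 0`, where the coefficient is `0 / 0 = 0`. -/
theorem inner_sub_projection_coeff_smul_eq_zero {H : Type*} [NormedAddCommGroup H]
    [InnerProductSpace ℝ H] (a b : H) :
    ⟪a - (⟪a, b⟫ / ‖b‖ ^ 2) • b, (⟪a, b⟫ / ‖b‖ ^ 2) • b⟫ = 0 := by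
  rcases eq_or_ne b 0 with rfl | hb
  · simp
  have hb2 : ‖b‖ ^ 2 ≠ 0 := by positivity
  rw [inner_sub_left, real_inner_smul_right, real_inner_smul_left, real_inner_smul_right,
    real_inner_self_eq_norm_sq]
  field_simp
  ring

theorem first_iss_solution_strong_source_condition_general
    {U H : Type*} [NormedAddCommGroup U] [NormedSpace ℝ U]
    [NormedAddCommGroup H] [InnerProductSpace ℝ H]
    (K : U →L[ℝ] H) (J : U → ℝ)
    (hhom : ∀ (c : ℝ) (x : U), J (c • x) = |c| * J x)
    (ω udag : U)
    (hssc : Kstar K (K ω) ∈ subdiff J udag) :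
    (∀ t : ℝ, 0 ≤ t → t < 1 → (t • Kstar K (K ω)) ∈ subdiff J 0) ∧
    Kstar K (K ω) ∈ subdiff J ((J udag / ‖K udag‖ ^ 2) • udag) ∧
    ⟪K ω - K ((J udag / ‖K udag‖ ^ 2) • udag),
      K ((J udag / ‖K udag‖ ^ 2) • udag)⟫ = 0 := by
  have hJ : ⟪K ω, K udag⟫ = J udag := by
    simpa using ((mem_subdiff_iff_of_abs_homogeneous hhom).1 hssc).1
  have hJ_nonneg : 0 ≤ J udag := (abs_nonneg _).trans (abs_apply_le_of_mem_subdiff hhom hssc udag)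
  refine ⟨fun t ht0 ht1 => smul_mem_subdiff_zero hhom hssc ?_,
    mem_subdiff_smul hhom hssc (by positivity), ?_⟩
  · rw [abs_of_nonneg ht0]
    exact ht1.le
  · rw [map_smul, ← hJ]
    exact inner_sub_projection_coeff_smul_eq_zero _ _

/-- First non-trivial solution of the ISS flow under the strong source condition. -/
theorem first_iss_solution_strong_source_condition
    {U H : Type*} [NormedAddCommGroup U] [NormedSpace ℝ U]
    [NormedAddCommGroup H] [InnerProductSpace ℝ H]
    (K : U →L[ℝ] H) (J : U → ℝ)
    (hconv : ConvexOn ℝ Set.univ J)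
    (hlsc : LowerSemicontinuous J)
    (hhom : ∀ (c : ℝ) (x : U), J (c • x) = |c| * J x)
    (ω udag : U) (hω : ω ≠ 0) (hKudag : K udag ≠ 0)
    (hssc : Kstar K (K ω) ∈ subdiff J udag) :
    (∀ t : ℝ, 0 ≤ t → t < 1 → (t • Kstar K (K ω)) ∈ subdiff J 0) ∧
    Kstar K (K ω) ∈ subdiff J ((J udag / ‖K udag‖ ^ 2) • udag) ∧
    ⟪K ω - K ((J udag / ‖K udag‖ ^ 2) • udag),
      K ((J udag / ‖K udag‖ ^ 2) • udag)⟫ = 0 :=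
  first_iss_solution_strong_source_condition_general K J hhom ω udag hssc
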